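/- Let X be a real n×T matrix with X·Xᵀ invertible, let M ∈ ℝ^T be nonzero with X·M ≠ 0, and let v = (X·Xᵀ)⁻¹·X·M be the regression vector. If u ∈ ℝⁿ with Xᵀ·u ≠ 0 attains the maximal sample correlation, i.e. ⟨Xᵀ·u, M⟩ / ‖Xᵀ·u‖₂ = ⟨Xᵀ·v, M⟩ / ‖Xᵀ·v‖₂, then u is a positive scalar multiple of v: there exists t > 0 with u = t·v. In other words, the correlation-maximizing projection direction is unique up to positive scaling. -/

import Mathlib

open Matrix
open scoped RealInnerProductSpace

/-!
Write `b = Xᵀ v` for the fitted values of the regression. The normal equations `X b = X M`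
say that the residual `M - b` is orthogonal to the row space of `X`, so for every `u` the
correlation of `Xᵀ u` with `M` equals `⟨Xᵀ u, b⟩ / ‖Xᵀ u‖`, and the hypothesis becomes
`⟨Xᵀ u, b⟩ = ‖Xᵀ u‖ ‖b‖`. By the equality case of Cauchy–Schwarz `Xᵀ u` is a positive multiple
of `b = Xᵀ v`, and `Xᵀ` is injective because `X Xᵀ` is invertible.
-/

theorem exists_pos_smul_of_real_inner_div_norm_eq {F : Type*} [NormedAddCommGroup F]
    [InnerProductSpace ℝ F] {x y : F} (hy : y ≠ 0) (h : ⟪x, y⟫ / ‖x‖ = ⟪y, y⟫ / ‖y‖) :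
    ∃ t : ℝ, 0 < t ∧ x = t • y := by
  have hy_pos : 0 < ‖y‖ := norm_pos_iff.mpr hy
  have h_norm : ⟪x, y⟫ / ‖x‖ = ‖y‖ := by
    rw [h, real_inner_self_eq_norm_sq]
    field_simp
  have hx : x ≠ 0 := by
    rintro rfl
    simp only [inner_zero_left, zero_div] at h_norm
    exact hy_pos.ne h_norm
  have h_one : ⟪y, x⟫ / (‖y‖ * ‖x‖) = 1 := by
    rw [real_inner_comm, mul_comm, ← div_div, h_norm, div_self hy_pos.ne']
  exact ((real_inner_div_norm_mul_norm_eq_one_iff y x).mp h_one).2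

section EuclideanCoordinates

variable {ι : Type*} [Fintype ι]

theorem sqrt_sum_sq_eq_norm_toLp (a : ι → ℝ) :
    √(∑ j, a j ^ 2) = ‖(WithLp.toLp 2 a : EuclideanSpace ℝ ι)‖ := by
  simp [EuclideanSpace.norm_eq, sq_abs]

theorem dotProduct_eq_inner_toLp (a b : ι → ℝ) :
    a ⬝ᵥ b = ⟪(WithLp.toLp 2 a : EuclideanSpace ℝ ι), WithLp.toLp 2 b⟫ := by
  rw [EuclideanSpace.inner_toLp_toLp, star_trivial, dotProduct_comm]

theorem exists_pos_smul_of_dotProduct_div_sqrt_eq {a b : ι → ℝ} (hb : b ≠ 0)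
    (h : a ⬝ᵥ b / √(∑ j, a j ^ 2) = b ⬝ᵥ b / √(∑ j, b j ^ 2)) :
    ∃ t : ℝ, 0 < t ∧ a = t • b := by
  simp only [dotProduct_eq_inner_toLp, sqrt_sum_sq_eq_norm_toLp] at h
  obtain ⟨t, ht, hab⟩ := exists_pos_smul_of_real_inner_div_norm_eq (by simpa using hb) h
  exact ⟨t, ht, by simpa using congrArg WithLp.ofLp hab⟩

end EuclideanCoordinates

namespace Matrix

variable {m n : Type*} [Fintype m] [Fintype n]

theorem transpose_mulVec_dotProduct {R : Type*} [CommSemiring R] (A : Matrix m n R)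
    (u : m → R) (w : n → R) : (Aᵀ *ᵥ u) ⬝ᵥ w = u ⬝ᵥ (A *ᵥ w) := by
  rw [mulVec_transpose, dotProduct_mulVec]

variable {K : Type*} [Field K] [DecidableEq m]

theorem mulVec_nonsing_inv_mulVec {A : Matrix m m K} (hA : IsUnit A) (y : m → K) :
    A *ᵥ (A⁻¹ *ᵥ y) = y := by
  rw [mulVec_mulVec, mul_nonsing_inv _ ((isUnit_iff_isUnit_det A).mp hA), one_mulVec]

theorem mulVec_injective_of_isUnit_mul {A : Matrix n m K} {B : Matrix m n K}
    (h : IsUnit (B * A)) : Function.Injective A.mulVec :=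
  Function.Injective.of_comp (f := B.mulVec) <| by
    simpa only [Function.comp_def, mulVec_mulVec] using mulVec_injective_iff_isUnit.mpr h

end Matrix

theorem correlation_maximizer_unique_general {n T : ℕ}
    (X : Matrix (Fin n) (Fin T) ℝ) (M : Fin T → ℝ)
    (hX : IsUnit (X * Xᵀ)) (hXM : X *ᵥ M ≠ 0)
    (v : Fin n → ℝ) (hv : v = (X * Xᵀ)⁻¹ *ᵥ (X *ᵥ M))
    (u : Fin n → ℝ)
    (heq : (Xᵀ *ᵥ u) ⬝ᵥ M / Real.sqrt (∑ j, ((Xᵀ *ᵥ u) j) ^ 2)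
        = (Xᵀ *ᵥ v) ⬝ᵥ M / Real.sqrt (∑ j, ((Xᵀ *ᵥ v) j) ^ 2)) :
    ∃ t : ℝ, 0 < t ∧ u = t • v := by
  have hfit : X *ᵥ (Xᵀ *ᵥ v) = X *ᵥ M := by
    rw [hv, mulVec_mulVec, mulVec_nonsing_inv_mulVec hX]
  have hfit_ne : Xᵀ *ᵥ v ≠ 0 := fun h ↦ hXM (by rw [← hfit, h, mulVec_zero])
  have hresidual : ∀ w, (Xᵀ *ᵥ w) ⬝ᵥ M = (Xᵀ *ᵥ w) ⬝ᵥ (Xᵀ *ᵥ v) := fun w ↦ by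
    rw [transpose_mulVec_dotProduct, ← hfit, ← transpose_mulVec_dotProduct]
  rw [hresidual, hresidual] at heq
  obtain ⟨t, ht, hst⟩ := exists_pos_smul_of_dotProduct_div_sqrt_eq hfit_ne heq
  refine ⟨t, ht, mulVec_injective_of_isUnit_mul hX ?_⟩
  rw [hst, mulVec_smul]

/-- **Uniqueness of the correlation-maximizing direction up to positive scaling.**
For `X ∈ ℝ^{n×T}` with `X Xᵀ` invertible, `M ≠ 0`, `X M ≠ 0`, and the regression
vector `v = (X Xᵀ)⁻¹ X M`: if `u ∈ ℝⁿ` with `Xᵀ u ≠ 0` attains the maximal sample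
correlation, i.e. `⟨Xᵀu, M⟩ / ‖Xᵀu‖₂ = ⟨Xᵀv, M⟩ / ‖Xᵀv‖₂`, then `u = t • v` for
some `t > 0`. -/
theorem correlation_maximizer_unique {n T : ℕ}
    (X : Matrix (Fin n) (Fin T) ℝ) (M : Fin T → ℝ)
    (hX : IsUnit (X * Xᵀ)) (hM : M ≠ 0) (hXM : X *ᵥ M ≠ 0)
    (v : Fin n → ℝ) (hv : v = (X * Xᵀ)⁻¹ *ᵥ (X *ᵥ M))
    (u : Fin n → ℝ) (hu : Xᵀ *ᵥ u ≠ 0)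
    (heq : (Xᵀ *ᵥ u) ⬝ᵥ M / Real.sqrt (∑ j, ((Xᵀ *ᵥ u) j) ^ 2)
        = (Xᵀ *ᵥ v) ⬝ᵥ M / Real.sqrt (∑ j, ((Xᵀ *ᵥ v) j) ^ 2)) :
    ∃ t : ℝ, 0 < t ∧ u = t • v :=
  correlation_maximizer_unique_general X M hX hXM v hv u heq
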